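/- For a cubic Hamiltonian vector field f = J∇H on ℝ^n, the Kahan map preserves the measure dx₁∧…∧dx_n / det(I − (ε/2)f'(x)); equivalently, the Jacobian determinant of Φ_f(·,ε) at x equals det(I − (ε/2)f'(Φ_f(x,ε))) / det(I − (ε/2)f'(x)). -/

import Mathlib

/-!
Write `A(y) = 1 - (ε/2) f'(y)`, so that the Kahan map `Φ` is characterised by
`A(y) (Φ(y) - y) = ε f(y)`. Differentiating this relation at `x` gives
`A(x) (Φ'(x) - 1) - (ε/2) f''(x)(·, Φ(x) - x) = ε f'(x)`. For a cubic Hamiltonian the field `f`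
is quadratic, so `f''` is a constant symmetric bilinear map and `f'(Φ(x)) = f'(x) + f''(Φ(x) - x)`;
hence `A(x) Φ'(x) = 1 + (ε/2) f'(Φ(x))`. Finally `f' = J · Hess H` with `J` skew and `Hess H`
symmetric, and transposition gives `det(1 + J S) = det(1 - J S)` for such a product.
-/

open Matrix

namespace MvPolynomial

section Algebra

variable {σ R : Type*}

theorem totalDegree_pderiv_le [CommSemiring R] (i : σ) (r : MvPolynomial σ R) :
    (pderiv i r).totalDegree ≤ r.totalDegree - 1 := by
  refine Finset.sup_le fun m hm => ?_
  rw [mem_support_iff, coeff_pderiv] at hm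
  have h := le_totalDegree (mem_support_iff.2 (left_ne_zero_of_mul hm))
  rw [Finsupp.sum_add_index' (fun _ => rfl) (fun _ _ _ => rfl),
    Finsupp.sum_single_index rfl] at h
  omega

theorem pderiv_comm [CommRing R] (i j : σ) (r : MvPolynomial σ R) :
    pderiv i (pderiv j r) = pderiv j (pderiv i r) := by
  classical
  have h : ⁅pderiv i, pderiv j⁆ = (0 : Derivation R (MvPolynomial σ R) (MvPolynomial σ R)) :=
    derivation_ext fun k => by
      rw [Derivation.commutator_apply]
      simp [pderiv_X, Pi.single_apply, apply_ite (pderiv _)]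
  have hr := congr($h r)
  rwa [Derivation.commutator_apply, Derivation.zero_apply, sub_eq_zero] at hr

noncomputable def hessian [CommSemiring R] (p : MvPolynomial σ R) :
    Matrix σ σ (MvPolynomial σ R) :=
  Matrix.of fun i j => pderiv j (pderiv i p)

theorem hessian_transpose [CommRing R] (p : MvPolynomial σ R) : (hessian p)ᵀ = hessian p :=
  Matrix.ext fun i j => pderiv_comm i j p

variable [Fintype σ] [CommSemiring R]

noncomputable def pderivAlong (v : σ → R) (r : MvPolynomial σ R) : MvPolynomial σ R :=
  ∑ k, C (v k) * pderiv k r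

theorem pderivAlong_single [DecidableEq σ] (j : σ) (r : MvPolynomial σ R) :
    pderivAlong (Pi.single j 1) r = pderiv j r := by
  simp [pderivAlong, Pi.single_apply]

theorem eval_pderivAlong (y v : σ → R) (r : MvPolynomial σ R) :
    eval y (pderivAlong v r) = v ⬝ᵥ fun k => eval y (pderiv k r) := by
  simp [pderivAlong, dotProduct]

theorem totalDegree_pderivAlong_le (v : σ → R) (r : MvPolynomial σ R) :
    (pderivAlong v r).totalDegree ≤ r.totalDegree - 1 := by
  refine (totalDegree_finsetSum _ _).trans (Finset.sup_le fun k _ => ?_)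
  refine (totalDegree_mul _ _).trans ?_
  rw [totalDegree_C, zero_add]
  exact totalDegree_pderiv_le k r

end Algebra

section Calculus

variable {σ ι 𝕜 : Type*} [Fintype σ] [NontriviallyNormedField 𝕜] [CompleteSpace 𝕜]

theorem contDiff_eval (r : MvPolynomial σ 𝕜) {n : WithTop ℕ∞} :
    ContDiff 𝕜 n (fun y : σ → 𝕜 => eval y r) :=
  (AnalyticOnNhd.eval_mvPolynomial r).contDiff

theorem contDiff_eval_pi [Fintype ι] (Q : ι → MvPolynomial σ 𝕜) {n : WithTop ℕ∞} :
    ContDiff 𝕜 n (fun y i => eval y (Q i)) :=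
  contDiff_pi.2 fun i => contDiff_eval (Q i)

theorem fderiv_eval_apply (r : MvPolynomial σ 𝕜) (x v : σ → 𝕜) :
    fderiv 𝕜 (fun y => eval y r) x v = eval x (pderivAlong v r) := by
  classical
  simp only [pderivAlong, map_sum, map_mul, eval_C]
  induction r using MvPolynomial.induction_on with
  | C a => simp
  | add p q hp hq =>
    simp only [map_add]
    rw [fderiv_fun_add ((contDiff_eval p (n := 1)).differentiable one_ne_zero x)
      ((contDiff_eval q (n := 1)).differentiable one_ne_zero x)]
    simp [hp, hq, mul_add, Finset.sum_add_distrib]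
  | mul_X p i hp =>
    have hXi : fderiv 𝕜 (fun y : σ → 𝕜 => y i) x v = v i := by
      rw [(hasFDerivAt_apply i x).fderiv]; rfl
    simp only [map_mul, eval_X]
    rw [fderiv_fun_mul ((contDiff_eval p (n := 1)).differentiable one_ne_zero x)
      (differentiableAt_apply i x)]
    simp [hp, hXi, pderiv_X, Pi.single_apply, mul_add, Finset.sum_add_distrib, Finset.mul_sum,
      apply_ite (eval x), mul_ite, mul_left_comm, mul_comm]

theorem eq_eval_pderiv_of_fderiv_eval_eq_dotProduct {p : MvPolynomial σ 𝕜}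
    {g : (σ → 𝕜) → σ → 𝕜} (hg : ∀ y v, fderiv 𝕜 (fun y => eval y p) y v = g y ⬝ᵥ v) :
    g = fun y j => eval y (pderiv j p) := by
  classical
  funext y j
  have := hg y (Pi.single j 1)
  rwa [fderiv_eval_apply, pderivAlong_single, dotProduct_single, mul_one, eq_comm] at this

theorem fderiv_eval_pi_apply (Q : ι → MvPolynomial σ 𝕜) (x v : σ → 𝕜) :
    fderiv 𝕜 (fun y i => eval y (Q i)) x v = fun i => eval x (pderivAlong v (Q i)) := by
  rw [fderiv_pi fun i => (contDiff_eval (Q i) (n := 1)).differentiable one_ne_zero x]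
  ext i
  exact fderiv_eval_apply (Q i) x v

theorem fderiv_eval_pi_eq_of_totalDegree_le_one {Q : ι → MvPolynomial σ 𝕜}
    (hQ : ∀ i, (Q i).totalDegree ≤ 1) (x y : σ → 𝕜) :
    fderiv 𝕜 (fun z i => eval z (Q i)) y = fderiv 𝕜 (fun z i => eval z (Q i)) x := by
  ext v i
  rw [fderiv_eval_pi_apply, fderiv_eval_pi_apply]
  dsimp only
  have h : (pderivAlong v (Q i)).totalDegree = 0 := by
    have := totalDegree_pderivAlong_le v (Q i); have := hQ i; omega
  rw [totalDegree_eq_zero_iff_eq_C.1 h, eval_C, eval_C]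

theorem hasFDerivAt_fderiv_eval_pi_of_totalDegree_le_two [Fintype ι] {Q : ι → MvPolynomial σ 𝕜}
    (hQ : ∀ i, (Q i).totalDegree ≤ 2) (x y : σ → 𝕜) :
    HasFDerivAt (fderiv 𝕜 (fun z i => eval z (Q i)))
      (fderiv 𝕜 (fderiv 𝕜 (fun z i => eval z (Q i))) x) y := by
  have hdiff : Differentiable 𝕜 (fderiv 𝕜 (fun z i => eval z (Q i))) :=
    ((contDiff_eval_pi Q (n := 2)).fderiv_right one_add_one_eq_two.le).differentiable one_ne_zero
  have hdir : ∀ z w v, fderiv 𝕜 (fderiv 𝕜 (fun z i => eval z (Q i))) z w v =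
      fderiv 𝕜 (fun z i => eval z (pderivAlong v (Q i))) z w := by
    intro z w v
    have : (fun z i => eval z (pderivAlong v (Q i))) =
        fun z => fderiv 𝕜 (fun z i => eval z (Q i)) z v := by
      funext z; rw [fderiv_eval_pi_apply]
    rw [this, fderiv_clm_apply (hdiff z) (differentiableAt_const v)]
    simp
  have hQ' : ∀ v i, (pderivAlong v (Q i)).totalDegree ≤ 1 := fun v i =>
    (totalDegree_pderivAlong_le v (Q i)).trans (by have := hQ i; omega)
  convert (hdiff y).hasFDerivAt using 1
  ext w v i
  rw [hdir, hdir, fderiv_eval_pi_eq_of_totalDegree_le_one (hQ' v) x y]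

theorem fderiv_eval_pderivAlong_apply [DecidableEq σ] (J : Matrix σ σ 𝕜) (p : MvPolynomial σ 𝕜)
    (y v : σ → 𝕜) :
    fderiv 𝕜 (fun z i => eval z (pderivAlong (J i) p)) y v =
      (J * (hessian p).map (eval y)) *ᵥ v := by
  rw [fderiv_eval_pi_apply]
  ext i
  simp [pderivAlong, hessian, mulVec, dotProduct, Matrix.mul_apply, Finset.mul_sum,
    mul_comm, mul_left_comm]

end Calculus

end MvPolynomial

theorem eq_add_of_hasFDerivAt_const {𝕜 E G : Type*} [NontriviallyNormedField 𝕜]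
    [IsRCLikeNormedField 𝕜] [NormedAddCommGroup E] [NormedSpace 𝕜 E] [NormedAddCommGroup G]
    [NormedSpace 𝕜 G] {F : E → G} {B : E →L[𝕜] G} (hF : ∀ y, HasFDerivAt F B y) (x y : E) :
    F y = F x + B (y - x) := by
  have hG : ∀ y, HasFDerivAt (fun y => F x + B (y - x)) B y := fun y => by
    simpa using (B.hasFDerivAt.comp y ((hasFDerivAt_id y).sub_const x)).const_add (F x)
  exact congrFun (eq_of_fderiv_eq (fun y => (hF y).differentiableAt)
    (fun y => (hG y).differentiableAt) (fun y => (hF y).fderiv.trans (hG y).fderiv.symm) x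
    (by simp)) y

section Kahan

variable {E : Type*} [NormedAddCommGroup E] [NormedSpace ℝ E]

/-- `Ring.inverse` is `0` at non-units, so this is the Kahan map exactly where
`1 - (ε / 2) • f'(x)` is invertible. -/
noncomputable def kahanMap (f : E → E) (ε : ℝ) (x : E) : E :=
  x + ε • Ring.inverse (1 - (ε / 2) • fderiv ℝ f x) (f x)

variable {f : E → E} {ε : ℝ} {x : E}

theorem one_sub_smul_fderiv_apply_kahanMap_sub (hx : IsUnit (1 - (ε / 2) • fderiv ℝ f x)) :
    (1 - (ε / 2) • fderiv ℝ f x) (kahanMap f ε x - x) = ε • f x := by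
  rw [kahanMap, add_sub_cancel_left, map_smul]
  exact congr(ε • $(Ring.mul_inverse_cancel _ hx) (f x))

variable [CompleteSpace E]

theorem differentiableAt_kahanMap (hf : DifferentiableAt ℝ f x)
    (hf' : DifferentiableAt ℝ (fderiv ℝ f) x) (hx : IsUnit (1 - (ε / 2) • fderiv ℝ f x)) :
    DifferentiableAt ℝ (kahanMap f ε) x := by
  unfold kahanMap
  have hinv := (hf'.const_smul (ε / 2)).const_sub 1 |>.inverse hx
  fun_prop

theorem comp_fderiv_kahanMap {B : E →L[ℝ] E →L[ℝ] E} (hf : Differentiable ℝ f)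
    (hB : ∀ y, HasFDerivAt (fderiv ℝ f) B y) (hx : IsUnit (1 - (ε / 2) • fderiv ℝ f x)) :
    (1 - (ε / 2) • fderiv ℝ f x) ∘L fderiv ℝ (kahanMap f ε) x =
      1 + (ε / 2) • fderiv ℝ f (kahanMap f ε x) := by
  set Φ := kahanMap f ε
  have hA : HasFDerivAt (fun y => 1 - (ε / 2) • fderiv ℝ f y) (-((ε / 2) • B)) x := by
    simpa using ((hB x).const_smul (ε / 2)).const_sub 1
  have hΦ : HasFDerivAt Φ (fderiv ℝ Φ x) x :=
    (differentiableAt_kahanMap (hf x) (hB x).differentiableAt hx).hasFDerivAt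
  have hrel : (fun y => (1 - (ε / 2) • fderiv ℝ f y) (Φ y - y)) =ᶠ[nhds x] fun y => ε • f y :=
    (hA.continuousAt.eventually (Units.isOpen.mem_nhds hx)).mono
      fun y hy => one_sub_smul_fderiv_apply_kahanMap_sub hy
  have hderiv := ((hA.clm_apply (hΦ.sub (hasFDerivAt_id x))).congr_of_eventuallyEq
    hrel.symm).unique ((hf x).hasFDerivAt.const_smul ε)
  have hsymm := second_derivative_symmetric (fun y => (hf y).hasFDerivAt) (hB x)
  have haff := eq_add_of_hasFDerivAt_const hB x (Φ x)
  ext v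
  set A := 1 - (ε / 2) • fderiv ℝ f x
  have hv := congr($hderiv v)
  have hAv : A v = v - (ε / 2) • fderiv ℝ f x v := rfl
  simp only [_root_.add_apply, ContinuousLinearMap.comp_apply, _root_.sub_apply,
    ContinuousLinearMap.id_apply, ContinuousLinearMap.flip_apply, _root_.neg_apply,
    _root_.smul_apply, Pi.sub_apply, id, map_sub A, hsymm v] at hv
  simp only [ContinuousLinearMap.comp_apply, _root_.add_apply, one_apply_eq_self,
    _root_.smul_apply, haff]
  linear_combination (norm := module) hv + hAv

end Kahan

namespace Matrix

variable {ι 𝕜 : Type*} [Fintype ι] [DecidableEq ι] [NontriviallyNormedField 𝕜]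
  {P : Matrix ι ι 𝕜} {T : (ι → 𝕜) →L[𝕜] ι → 𝕜}

theorem one_sub_smul_mulVec_of_mulVec_eq (hPT : ∀ v, P *ᵥ v = T v) (c : 𝕜) (v : ι → 𝕜) :
    (1 - c • P) *ᵥ v = (1 - c • T) v := by
  simp [sub_mulVec, smul_mulVec, hPT]

variable [CompleteSpace 𝕜]

theorem isUnit_det_iff_isUnit_of_mulVec_eq (hPT : ∀ v, P *ᵥ v = T v) :
    IsUnit P.det ↔ IsUnit T := by
  have h : toLin' P = (T : (ι → 𝕜) →ₗ[𝕜] ι → 𝕜) := LinearMap.ext hPT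
  rw [ContinuousLinearMap.isUnit_iff_isUnit_toLinearMap, LinearMap.isUnit_iff_isUnit_det, ← h,
    LinearMap.det_toLin']

theorem inv_mulVec_eq_ringInverse_apply (hPT : ∀ v, P *ᵥ v = T v) (w : ι → 𝕜) :
    P⁻¹ *ᵥ w = Ring.inverse T w := by
  by_cases hP : IsUnit P.det
  · have hw : P *ᵥ Ring.inverse T w = w := by
      rw [hPT]
      exact congr($(Ring.mul_inverse_cancel T ((isUnit_det_iff_isUnit_of_mulVec_eq hPT).1 hP)) w)
    calc P⁻¹ *ᵥ w = P⁻¹ *ᵥ (P *ᵥ Ring.inverse T w) := by rw [hw]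
      _ = Ring.inverse T w := by rw [mulVec_mulVec, nonsing_inv_mul _ hP, one_mulVec]
  · rw [nonsing_inv_apply_not_isUnit _ hP,
      Ring.inverse_non_unit _ (mt (isUnit_det_iff_isUnit_of_mulVec_eq hPT).2 hP)]
    simp

theorem det_one_add_mul_eq_det_one_sub_mul {R : Type*} [CommRing R] {J S : Matrix ι ι R}
    (hJ : Jᵀ = -J) (hS : Sᵀ = S) : (1 + J * S).det = (1 - J * S).det := by
  rw [← det_transpose, transpose_add, transpose_one, transpose_mul, hS, hJ, mul_neg, ← neg_mul,
    det_one_add_mul_comm, mul_neg, ← sub_eq_add_neg]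

end Matrix

theorem kahan_invariant_measure_general {n : ℕ}
    (J : Matrix (Fin n) (Fin n) ℝ) (hJ : Jᵀ = -J)
    (p : MvPolynomial (Fin n) ℝ) (hp : p.totalDegree ≤ 3)
    (H : (Fin n → ℝ) → ℝ) (hH : ∀ x, H x = MvPolynomial.eval x p)
    (g : (Fin n → ℝ) → (Fin n → ℝ)) (hg : ∀ x v, fderiv ℝ H x v = g x ⬝ᵥ v)
    (f : (Fin n → ℝ) → (Fin n → ℝ)) (hf : ∀ x, f x = J.mulVec (g x))
    (M : (Fin n → ℝ) → Matrix (Fin n) (Fin n) ℝ)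
    (hM : ∀ x v, (M x).mulVec v = fderiv ℝ f x v)
    (ε : ℝ)
    (Φ : (Fin n → ℝ) → (Fin n → ℝ))
    (hΦ : ∀ x, Φ x = x + ε • ((1 - (ε / 2) • M x)⁻¹.mulVec (f x)))
    (x : Fin n → ℝ)
    (hx : IsUnit (1 - (ε / 2) • M x).det)
    (N : Matrix (Fin n) (Fin n) ℝ) (hN : ∀ v, N.mulVec v = fderiv ℝ Φ x v) :
    N.det = (1 - (ε / 2) • M (Φ x)).det / (1 - (ε / 2) • M x).det := by
  have hgp := MvPolynomial.eq_eval_pderiv_of_fderiv_eval_eq_dotProduct (p := p)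
    (by rw [← funext hH]; exact hg)
  have hfp : f = fun y i => MvPolynomial.eval y (MvPolynomial.pderivAlong (J i) p) := by
    funext y i
    rw [hf, hgp, MvPolynomial.eval_pderivAlong]
    rfl
  have hdeg : ∀ i, (MvPolynomial.pderivAlong (J i) p).totalDegree ≤ 2 := fun i =>
    (MvPolynomial.totalDegree_pderivAlong_le _ _).trans (by omega)
  have hA := fun y => one_sub_smul_mulVec_of_mulVec_eq (hM y) (ε / 2)
  have hΦk : Φ = kahanMap f ε := funext fun y => by
    rw [hΦ, inv_mulVec_eq_ringInverse_apply (hA y), kahanMap]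
  have hkey := comp_fderiv_kahanMap
    (hfp ▸ (MvPolynomial.contDiff_eval_pi _ (n := 1)).differentiable one_ne_zero)
    (hfp ▸ MvPolynomial.hasFDerivAt_fderiv_eval_pi_of_totalDegree_le_two hdeg x)
    ((isUnit_det_iff_isUnit_of_mulVec_eq (hA x)).1 hx)
  rw [← hΦk] at hkey
  have hmat : (1 - (ε / 2) • M x) * N = 1 + (ε / 2) • M (Φ x) :=
    mulVec_injective <| funext fun v => by
      rw [← mulVec_mulVec, hN, hA, ← ContinuousLinearMap.comp_apply, hkey]
      simp [add_mulVec, smul_mulVec, hM]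
  have hMJ : M (Φ x) = J * (MvPolynomial.hessian p).map (MvPolynomial.eval (Φ x)) :=
    mulVec_injective <| funext fun v => by
      rw [hM, hfp, MvPolynomial.fderiv_eval_pderivAlong_apply]
  rw [eq_div_iff hx.ne_zero, mul_comm, ← det_mul, hmat, hMJ, ← mul_smul_comm,
    det_one_add_mul_eq_det_one_sub_mul hJ
      (by rw [transpose_smul, ← transpose_map, MvPolynomial.hessian_transpose])]

/-- The Kahan map of a cubic Hamiltonian vector field `f = J∇H` preserves the measure
`dx₁∧…∧dx_n / det(I − (ε/2)f'(x))`: the Jacobian determinant of `Φ` at `x` equals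
`det(I − (ε/2)f'(Φ(x))) / det(I − (ε/2)f'(x))`. -/
theorem kahan_invariant_measure {n : ℕ}
    (J : Matrix (Fin n) (Fin n) ℝ) (hJ : Jᵀ = -J)
    (p : MvPolynomial (Fin n) ℝ) (hp : p.totalDegree ≤ 3)
    (H : (Fin n → ℝ) → ℝ) (hH : ∀ x, H x = MvPolynomial.eval x p)
    (g : (Fin n → ℝ) → (Fin n → ℝ)) (hg : ∀ x v, fderiv ℝ H x v = g x ⬝ᵥ v)
    (f : (Fin n → ℝ) → (Fin n → ℝ)) (hf : ∀ x, f x = J.mulVec (g x))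
    (M : (Fin n → ℝ) → Matrix (Fin n) (Fin n) ℝ)
    (hM : ∀ x v, (M x).mulVec v = fderiv ℝ f x v)
    (ε : ℝ)
    (Φ : (Fin n → ℝ) → (Fin n → ℝ))
    (hΦ : ∀ x, Φ x = x + ε • ((1 - (ε / 2) • M x)⁻¹.mulVec (f x)))
    (x : Fin n → ℝ)
    (hx : IsUnit (1 - (ε / 2) • M x).det)
    (hΦx : IsUnit (1 - (ε / 2) • M (Φ x)).det)
    (N : Matrix (Fin n) (Fin n) ℝ) (hN : ∀ v, N.mulVec v = fderiv ℝ Φ x v) :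
    N.det = (1 - (ε / 2) • M (Φ x)).det / (1 - (ε / 2) • M x).det :=
  kahan_invariant_measure_general J hJ p hp H hH g hg f hf M hM ε Φ hΦ x hx N hN
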